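/- arXiv:2506.14279 — 4 statements merged into one kernel-verified Lean document; each statement's English description precedes it below -/
import Mathlib

section
/- Let G be an abelian group. The divisor-closed submonoids of the monoid B±(G) of plus-minus weighted zero-sum sequences over G are exactly the monoids B±(G₀) for subsets G₀ ⊆ G: each B±(G₀) is a divisor-closed submonoid of B±(G), and conversely every divisor-closed submonoid H of B±(G) equals B±(G₀) for some subset G₀ ⊆ G. -/
open Multiset

variable {G : Type*} [AddCommGroup G]

/-- `S` is a plus-minus weighted zero-sum sequence: `S` splits as `S₁ + S₂` with
`S₁.sum = S₂.sum`, i.e. some choice of signs `ε_i ∈ {+1, -1}` makes the weighted sum vanish. -/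
def IsPMZeroSum (S : Multiset G) : Prop :=
  ∃ S₁ S₂ : Multiset G, S = S₁ + S₂ ∧ S₁.sum = S₂.sum

/-- The monoid `B±(G₀)` of plus-minus weighted zero-sum sequences over `G₀ ⊆ G`, as an
additive submonoid of the free commutative monoid `Multiset G` of sequences over `G`. -/
def PMZS (G₀ : Set G) : AddSubmonoid (Multiset G) where
  carrier := {S | (∀ g ∈ S, g ∈ G₀) ∧ IsPMZeroSum S}
  zero_mem' := ⟨fun g hg => absurd hg (Multiset.notMem_zero g), 0, 0, by simp, rfl⟩
  add_mem' := by
    rintro S T ⟨hS, S₁, S₂, rfl, h12⟩ ⟨hT, T₁, T₂, rfl, h34⟩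
    exact ⟨fun g hg => (Multiset.mem_add.mp hg).elim (fun h => hS g h) (fun h => hT g h),
      S₁ + T₁, S₂ + T₂, add_add_add_comm S₁ S₂ T₁ T₂, by simp [h12, h34]⟩

/-- `A` is an atom (irreducible element) of the submonoid `H` of `Multiset G`. -/
def IsPMAtom (H : AddSubmonoid (Multiset G)) (A : Multiset G) : Prop :=
  A ∈ H ∧ A ≠ 0 ∧ ∀ B C : Multiset G, B ∈ H → C ∈ H → A = B + C → B = 0 ∨ C = 0

/-- The set of lengths `L(a)` of `a` in `H`: all `k` such that `a` is a sum of `k` atoms of `H`. -/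
def LengthSet (H : AddSubmonoid (Multiset G)) (a : Multiset G) : Set ℕ :=
  {k | ∃ l : List (Multiset G), (∀ A ∈ l, IsPMAtom H A) ∧ l.sum = a ∧ l.length = k}

/-- The set of successive distances `Δ(L)` of a set `L ⊆ ℕ`. -/
def DistSet (L : Set ℕ) : Set ℕ :=
  {d | 0 < d ∧ ∃ a ∈ L, a + d ∈ L ∧ ∀ b ∈ L, a < b → a + d ≤ b}

/-- The set of distances `Δ(H) = ⋃_{a ∈ H} Δ(L(a))`. -/
def DeltaM (H : AddSubmonoid (Multiset G)) : Set ℕ :=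
  {d | ∃ a ∈ H, d ∈ DistSet (LengthSet H a)}

/-- `a` divides `b` in `H`. -/
def DvdIn (H : AddSubmonoid (Multiset G)) (a b : Multiset G) : Prop :=
  ∃ c ∈ H, b = a + c

/-- `S` is a divisor-closed submonoid of `H`. -/
def IsDivClosed (H S : AddSubmonoid (Multiset G)) : Prop :=
  S ≤ H ∧ ∀ s ∈ S, ∀ a ∈ H, DvdIn H a s → a ∈ S

/-- The set of minimal distances
`Δ*(H) = {min Δ(S) : S a divisor-closed submonoid of H with Δ(S) ≠ ∅}`. -/
def DeltaStar (H : AddSubmonoid (Multiset G)) : Set ℕ :=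
  {d | ∃ S : AddSubmonoid (Multiset G), IsDivClosed H S ∧ (DeltaM S).Nonempty ∧ d = sInf (DeltaM S)}

/-- The set of lengths of atoms of `H`. -/
def AtomLengths (H : AddSubmonoid (Multiset G)) : Set ℕ :=
  {n | ∃ A : Multiset G, IsPMAtom H A ∧ Multiset.card A = n}

/-- The Davenport constant `D(H)` of `H`: the supremum of the lengths of the atoms of `H`.  -/
noncomputable def DavD (H : AddSubmonoid (Multiset G)) : ℕ :=
  sSup (AtomLengths H)

/-- The system of sets of lengths `L(H)` of `H`. -/
def LSys (H : AddSubmonoid (Multiset G)) : Set (Set ℕ) :=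
  {L | ∃ a ∈ H, L = LengthSet H a}

/-- `d` is the greatest common divisor of the set `S` of integers. -/
def IsSetGCD (S : Set ℤ) (d : ℕ) : Prop :=
  (∀ x ∈ S, (d : ℤ) ∣ x) ∧ ∀ c : ℕ, (∀ x ∈ S, (c : ℤ) ∣ x) → c ∣ d

/-- A family `e` of elements of an abelian group is independent if `∑ c i • e i = 0`
with integer coefficients implies `c i • e i = 0` for each `i`. -/
def IsIndepFamily {k : ℕ} (e : Fin k → G) : Prop :=
  ∀ c : Fin k → ℤ, ∑ i, c i • e i = 0 → ∀ i, c i • e i = 0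

/-- The (classical) Davenport constant of the abelian group `G`: the smallest `ℓ` such that
every sequence over `G` of length at least `ℓ` has a nonempty zero-sum subsequence. -/
noncomputable def DavenportGroup (G : Type*) [AddCommGroup G] : ℕ :=
  sInf {ℓ | ∀ S : Multiset G, ℓ ≤ Multiset.card S → ∃ T, T ≤ S ∧ T ≠ 0 ∧ T.sum = 0}


theorem mem_PMZS {G₀ : Set G} {S : Multiset G} :
    S ∈ PMZS G₀ ↔ (∀ g ∈ S, g ∈ G₀) ∧ IsPMZeroSum S :=
  Iff.rfl

theorem isPMZeroSum_add_self (X : Multiset G) : IsPMZeroSum (X + X) :=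
  ⟨X, X, rfl, rfl⟩

theorem mem_PMZS_univ {S : Multiset G} : S ∈ PMZS (Set.univ : Set G) ↔ IsPMZeroSum S := by
  simp [mem_PMZS]

theorem isDivClosed_PMZS (G₀ : Set G) : IsDivClosed (PMZS Set.univ) (PMZS G₀) := by
  refine ⟨fun S hS => mem_PMZS_univ.2 hS.2, ?_⟩
  rintro S hS A hA ⟨C, -, rfl⟩
  exact ⟨fun g hg => hS.1 g (mem_add.2 (Or.inl hg)), mem_PMZS_univ.1 hA⟩

theorem AddSubmonoid.exists_mem_ge_of_forall_exists_mem {α : Type*}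
    (H : AddSubmonoid (Multiset α)) (X : Multiset α) (hX : ∀ g ∈ X, ∃ T ∈ H, g ∈ T) :
    ∃ T ∈ H, X ≤ T := by
  induction X using Multiset.induction with
  | empty => exact ⟨0, H.zero_mem, le_rfl⟩
  | cons g X ih =>
    obtain ⟨t, htH, hgt⟩ := hX g (mem_cons_self g X)
    obtain ⟨T, hTH, hXT⟩ := ih fun x hx => hX x (mem_cons_of_mem hx)
    refine ⟨t + T, H.add_mem htH hTH, ?_⟩
    rw [← singleton_add]
    exact add_le_add (singleton_le.2 hgt) hXT

/-- Writing `T = X + U`, the plus-minus zero-sum `X` divides `T + T = X + (X + (U + U))`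
in `B±(G)`. -/
theorem IsDivClosed.mem_of_le {H : AddSubmonoid (Multiset G)}
    (hH : IsDivClosed (PMZS Set.univ) H) {X T : Multiset G} (hT : T ∈ H) (hXT : X ≤ T)
    (hX : IsPMZeroSum X) : X ∈ H := by
  obtain ⟨U, rfl⟩ := exists_add_of_le hXT
  have hX' : X ∈ PMZS Set.univ := mem_PMZS_univ.2 hX
  refine hH.2 _ (H.add_mem hT hT) X hX' ⟨X + (U + U), ?_, by abel⟩
  exact AddSubmonoid.add_mem _ hX' (mem_PMZS_univ.2 (isPMZeroSum_add_self U))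

theorem IsDivClosed.eq_PMZS {H : AddSubmonoid (Multiset G)}
    (hH : IsDivClosed (PMZS Set.univ) H) : H = PMZS {g | ∃ T ∈ H, g ∈ T} := by
  ext S
  refine ⟨fun hS => ⟨fun g hg => ⟨S, hS, hg⟩, (hH.1 hS).2⟩, ?_⟩
  rintro ⟨hsupp, hS⟩
  obtain ⟨T, hT, hST⟩ := H.exists_mem_ge_of_forall_exists_mem S hsupp
  exact hH.mem_of_le hT hST hS

/-- The divisor-closed submonoids of `B±(G)` are exactly the monoids `B±(G₀)` for
subsets `G₀ ⊆ G`. -/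
theorem stmt_0 (G : Type*) [AddCommGroup G] :
    (∀ G₀ : Set G, IsDivClosed (PMZS (Set.univ : Set G)) (PMZS G₀)) ∧
    (∀ S : AddSubmonoid (Multiset G), IsDivClosed (PMZS (Set.univ : Set G)) S →
      ∃ G₀ : Set G, S = PMZS G₀) :=
  ⟨isDivClosed_PMZS, fun _ hS => ⟨_, hS.eq_PMZS⟩⟩
end

section
/- Let G be an abelian group and let G₀ ⊆ G \ {0} be non-empty, and let H = B±(G₀). Then for each atom A of H one has {2, |A|} ⊆ L(A²). In particular, if Δ(H) ≠ ∅, then min Δ(H) divides |A| − 2 for every atom A of H, and min Δ(H) divides gcd{|A| − 2 : A an atom of H}, which equals gcd{|A| − |A'| : A, A' atoms of H}. -/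
open Multiset

variable {G : Type*} [AddCommGroup G]

/-!
Write `A²` additively as `A + A`. Besides the factorization into two copies of the atom `A`,
`A + A` is the sum of the `|A|` sequences `g g` with `g ∈ A`, each of which is an atom because
`0 ∉ G₀` forces every nonempty sequence of `B±(G₀)` to have length at least `2`.
Hence `2, |A| ∈ L(A + A)`.

For the divisibility statements, `m = min Δ(H)` divides every `e ∈ Δ(H)`: if `e = q m + r` with
`0 < r < m`, and `k, k + m ∈ L(a)`, `l, l + e ∈ L(b)`, then `q (k + m) + l` and `q k + l + e`
are lengths of `q a + b` at distance `r`, which produces a distance `≤ r < m` in `Δ(H)`. Chaining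
successive distances, `m` then divides every difference of two lengths of one element, in
particular `|A| - 2`. Since the atoms `g g` have length `2`, the greatest common divisor of the
`|A| - 2` is also that of the differences `|A| - |A'|`.
-/

/-- The witness `c` is the largest element of `L` in `[x, y)`, so `y` is the next element of `L`. -/
lemma exists_add_mem_distSet_of_lt {L : Set ℕ} {x y : ℕ} (hx : x ∈ L) (hy : y ∈ L)
    (hxy : x < y) : ∃ c ∈ L, ∃ d ∈ DistSet L, x ≤ c ∧ c + d = y := by
  set T := {b | b ∈ L ∧ x ≤ b ∧ b < y}
  obtain ⟨hcL, hxc, hcy⟩ : sSup T ∈ T :=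
    Nat.sSup_mem ⟨x, hx, le_rfl, hxy⟩ ⟨y, fun b hb => hb.2.2.le⟩
  refine ⟨sSup T, hcL, y - sSup T, ⟨by omega, sSup T, hcL, by rwa [Nat.add_sub_cancel' hcy.le],
    fun b hbL hcb => ?_⟩, hxc, by omega⟩
  by_contra! hby
  have : b ≤ sSup T := le_csSup ⟨y, fun b hb => hb.2.2.le⟩ ⟨hbL, by omega, by omega⟩
  omega

lemma dvd_sub_of_forall_distSet_dvd {L : Set ℕ} {m : ℕ} (hm : ∀ d ∈ DistSet L, m ∣ d)
    {x y : ℕ} (hx : x ∈ L) (hy : y ∈ L) (hxy : x ≤ y) : m ∣ y - x := by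
  induction y using Nat.strong_induction_on with
  | _ y ih =>
    rcases hxy.eq_or_lt with rfl | hlt
    · simp
    obtain ⟨c, hcL, d, hd, hxc, rfl⟩ := exists_add_mem_distSet_of_lt hx hy hlt
    have hdpos : 0 < d := hd.1
    have : c + d - x = (c - x) + d := by omega
    rw [this]
    exact dvd_add (ih c (by omega) hcL hxc) (hm d hd)

section LengthSet

variable {α : Type*} {H : AddSubmonoid (Multiset α)}

lemma zero_mem_lengthSet_zero : 0 ∈ LengthSet H 0 :=
  ⟨[], by simp, rfl, rfl⟩

lemma one_mem_lengthSet_of_isPMAtom {A : Multiset α} (hA : IsPMAtom H A) :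
    1 ∈ LengthSet H A :=
  ⟨[A], by simpa using hA, by simp, rfl⟩

lemma add_mem_lengthSet_add {a b : Multiset α} {x y : ℕ}
    (hx : x ∈ LengthSet H a) (hy : y ∈ LengthSet H b) : x + y ∈ LengthSet H (a + b) := by
  obtain ⟨l, hl, rfl, rfl⟩ := hx
  obtain ⟨m, hm, rfl, rfl⟩ := hy
  exact ⟨l ++ m, fun A hA => (List.mem_append.mp hA).elim (hl A) (hm A), by simp, by simp⟩

lemma mul_mem_lengthSet_nsmul {a : Multiset α} {x : ℕ} (hx : x ∈ LengthSet H a) (q : ℕ) :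
    q * x ∈ LengthSet H (q • a) := by
  induction q with
  | zero => simpa using zero_mem_lengthSet_zero
  | succ q ih => simpa [succ_nsmul, Nat.succ_mul] using add_mem_lengthSet_add ih hx

lemma sInf_deltaM_dvd (hne : (DeltaM H).Nonempty) {e : ℕ} (he : e ∈ DeltaM H) :
    sInf (DeltaM H) ∣ e := by
  set m := sInf (DeltaM H)
  obtain ⟨a, haH, hm0, k, hk, hkm, -⟩ := Nat.sInf_mem hne
  obtain ⟨b, hbH, -, l, hl, hle, -⟩ := he
  rw [Nat.dvd_iff_mod_eq_zero]
  by_contra hr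
  set q := e / m
  have hqm : m * q + e % m = e := Nat.div_add_mod e m
  have hmem : q • a + b ∈ H := H.add_mem (H.nsmul_mem haH q) hbH
  have hlong : q * (k + m) + l ∈ LengthSet H (q • a + b) :=
    add_mem_lengthSet_add (mul_mem_lengthSet_nsmul hkm q) hl
  have hshort : q * k + (l + e) ∈ LengthSet H (q • a + b) :=
    add_mem_lengthSet_add (mul_mem_lengthSet_nsmul hk q) hle
  have hlt : q * (k + m) + l < q * k + (l + e) := by rw [Nat.mul_add]; lia
  obtain ⟨c, -, d, hd, hc, hcd⟩ := exists_add_mem_distSet_of_lt hlong hshort hlt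
  have hmd : m ≤ d := Nat.sInf_le ⟨_, hmem, hd⟩
  have : e % m < m := Nat.mod_lt e hm0
  rw [Nat.mul_add] at hc
  lia

lemma sInf_deltaM_dvd_sub (hne : (DeltaM H).Nonempty) {a : Multiset α} (ha : a ∈ H)
    {x y : ℕ} (hx : x ∈ LengthSet H a) (hy : y ∈ LengthSet H a) (hxy : x ≤ y) :
    sInf (DeltaM H) ∣ y - x :=
  dvd_sub_of_forall_distSet_dvd (fun _ hd => sInf_deltaM_dvd hne ⟨a, ha, hd⟩) hx hy hxy

end LengthSet

section PMZS

variable {G₀ : Set G}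

lemma isPMZeroSum_singleton_iff {g : G} : IsPMZeroSum ({g} : Multiset G) ↔ g = 0 := by
  refine ⟨fun ⟨S₁, S₂, hS, hsum⟩ => ?_, fun hg => ⟨{g}, 0, by simp, by simp [hg]⟩⟩
  have hcard : card S₁ + card S₂ = 1 := by simpa using (congrArg card hS).symm
  rcases Nat.add_eq_one_iff.mp hcard with ⟨h1, -⟩ | ⟨-, h2⟩
  · obtain rfl := card_eq_zero.mp h1
    rw [zero_add] at hS
    subst hS
    simpa using hsum.symm
  · obtain rfl := card_eq_zero.mp h2
    rw [add_zero] at hS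
    subst hS
    simpa using hsum

lemma two_le_card_of_mem_PMZS (h0 : (0 : G) ∉ G₀) {S : Multiset G} (hS : S ∈ PMZS G₀)
    (hS0 : S ≠ 0) : 2 ≤ card S := by
  by_contra! hlt
  obtain ⟨g, rfl⟩ : ∃ g, S = {g} :=
    card_eq_one.mp (by have := card_pos.mpr hS0; omega)
  exact h0 (isPMZeroSum_singleton_iff.mp hS.2 ▸ hS.1 g (mem_singleton_self g))

lemma isPMAtom_pair (h0 : (0 : G) ∉ G₀) {g : G} (hg : g ∈ G₀) :
    IsPMAtom (PMZS G₀) ({g, g} : Multiset G) := by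
  refine ⟨⟨by simpa using hg, {g}, {g}, rfl, rfl⟩, by simp, fun B C hB hC hBC => ?_⟩
  by_contra! hBC0
  have hcard : 2 = card B + card C := by simpa using congrArg card hBC
  have := two_le_card_of_mem_PMZS h0 hB hBC0.1
  have := two_le_card_of_mem_PMZS h0 hC hBC0.2
  omega

lemma card_mem_lengthSet_add_self (h0 : (0 : G) ∉ G₀) {A : Multiset G}
    (hA : ∀ g ∈ A, g ∈ G₀) : card A ∈ LengthSet (PMZS G₀) (A + A) := by
  induction A using Multiset.induction_on with
  | empty => simpa using zero_mem_lengthSet_zero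
  | cons g A ih =>
    have hsplit : g ::ₘ A + g ::ₘ A = {g, g} + (A + A) := by
      simp only [insert_eq_cons, ← singleton_add]; abel
    rw [hsplit, card_cons, add_comm (card A) 1]
    exact add_mem_lengthSet_add
      (one_mem_lengthSet_of_isPMAtom (isPMAtom_pair h0 (hA g (mem_cons_self g A))))
      (ih fun x hx => hA x (mem_cons_of_mem hx))

end PMZS

lemma isSetGCD_sub_of_isSetGCD_sub_const {α : Type*} {p : α → Prop} {f : α → ℤ} {c : ℤ} {d : ℕ}
    (hd : IsSetGCD {x | ∃ a, p a ∧ x = f a - c} d) (hc : ∃ a₀, p a₀ ∧ f a₀ = c) :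
    IsSetGCD {x | ∃ a b, p a ∧ p b ∧ x = f a - f b} d := by
  refine ⟨?_, fun e he => hd.2 e ?_⟩
  · rintro x ⟨a, b, ha, hb, rfl⟩
    have := dvd_sub (hd.1 _ ⟨a, ha, rfl⟩) (hd.1 _ ⟨b, hb, rfl⟩)
    rwa [sub_sub_sub_cancel_right] at this
  · obtain ⟨a₀, ha₀, rfl⟩ := hc
    rintro x ⟨a, ha, rfl⟩
    exact he _ ⟨a, a₀, ha, ha₀, rfl⟩

/-- For `G₀ ⊆ G \ {0}` nonempty and `H = B±(G₀)`: every atom `A` satisfies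
`{2, |A|} ⊆ L(A²)`; if `Δ(H) ≠ ∅` then `min Δ(H)` divides `|A| - 2` for every atom `A`,
and `min Δ(H)` divides `gcd {|A| - 2 : A atom}`, which equals `gcd {|A| - |A'| : A, A' atoms}`. -/
theorem stmt_1 (G : Type*) [AddCommGroup G] (G₀ : Set G) (h0 : (0 : G) ∉ G₀)
    (hne : G₀.Nonempty) :
    (∀ A : Multiset G, IsPMAtom (PMZS G₀) A →
      ({2, Multiset.card A} : Set ℕ) ⊆ LengthSet (PMZS G₀) (A + A)) ∧
    ((DeltaM (PMZS G₀)).Nonempty →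
      (∀ A : Multiset G, IsPMAtom (PMZS G₀) A →
        ((sInf (DeltaM (PMZS G₀)) : ℕ) : ℤ) ∣ (Multiset.card A : ℤ) - 2) ∧
      (∀ d : ℕ,
        IsSetGCD {x : ℤ | ∃ A : Multiset G,
            IsPMAtom (PMZS G₀) A ∧ x = (Multiset.card A : ℤ) - 2} d →
          sInf (DeltaM (PMZS G₀)) ∣ d ∧
          IsSetGCD {x : ℤ | ∃ A A' : Multiset G,
            IsPMAtom (PMZS G₀) A ∧ IsPMAtom (PMZS G₀) A' ∧
            x = (Multiset.card A : ℤ) - (Multiset.card A' : ℤ)} d)) := by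
  have lengths : ∀ A : Multiset G, IsPMAtom (PMZS G₀) A →
      ({2, Multiset.card A} : Set ℕ) ⊆ LengthSet (PMZS G₀) (A + A) := by
    rintro A hA n (rfl | rfl)
    · exact add_mem_lengthSet_add (one_mem_lengthSet_of_isPMAtom hA)
        (one_mem_lengthSet_of_isPMAtom hA)
    · exact card_mem_lengthSet_add_self h0 hA.1.1
  refine ⟨lengths, fun hΔ => ?_⟩
  have dvd_card_sub_two : ∀ A : Multiset G, IsPMAtom (PMZS G₀) A →
      ((sInf (DeltaM (PMZS G₀)) : ℕ) : ℤ) ∣ (Multiset.card A : ℤ) - 2 := by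
    intro A hA
    have hcard := two_le_card_of_mem_PMZS h0 hA.1 hA.2.1
    have := sInf_deltaM_dvd_sub hΔ ((PMZS G₀).add_mem hA.1 hA.1)
      (lengths A hA (by simp)) (lengths A hA (by simp)) hcard
    exact_mod_cast Int.natCast_dvd_natCast.mpr this
  obtain ⟨g, hg⟩ := hne
  refine ⟨dvd_card_sub_two, fun d hd => ⟨hd.2 _ ?_, isSetGCD_sub_of_isSetGCD_sub_const hd
    ⟨{g, g}, isPMAtom_pair h0 hg, by simp⟩⟩⟩
  rintro x ⟨A, hA, rfl⟩
  exact dvd_card_sub_two A hA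
end

section
/- Let G be an abelian group, let g ∈ G \ {0}, and let H = B±({g}). (1) If the order of g is even or infinite, then H is isomorphic (as a monoid) to (ℕ₀, +); in particular Δ(H) = ∅. (2) If the order of g is odd, then H is isomorphic to the numerical monoid ⟨2, ord(g)⟩ ⊆ (ℕ₀, +) generated by 2 and ord(g); in particular Δ(H) = {ord(g) − 2}. -/
open Multiset

variable {G : Type*} [AddCommGroup G]

/-!
Every sequence over `{g}` is `g^n`, and `g^n` splits into two parts with equal sums iff
`n = a + b` with `a • g = b • g`, i.e. iff `n = 2x + y · ord g`. Hence `n ↦ g^n` identifies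
`B±({g})` with the numerical monoid `⟨2, ord g⟩` (which is `2ℕ ≅ ℕ` when `ord g` is even or `0`),
and atoms and lengths can be computed in `ℕ`. For odd `m = ord g ≥ 3` the atoms are `2` and `m`,
so the lengths of `n` are the `x + y` with `2x + my = n`. Two such representations differ by
trading `m` copies of `2` for `2` copies of `m` some number of times, and each trade changes the
length by `m - 2`; so every set of lengths is an arithmetic progression with difference `m - 2`,
and `L(2m) = {2, m}` shows that this distance occurs.
-/

section Transfer

variable {M α : Type*} [AddMonoid M]

def IsAtomIn (N : AddSubmonoid M) (n : M) : Prop :=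
  n ∈ N ∧ n ≠ 0 ∧ ∀ b ∈ N, ∀ c ∈ N, n = b + c → b = 0 ∨ c = 0

def lengthsIn (N : AddSubmonoid M) (n : M) : Set ℕ :=
  {k | ∃ l : List M, (∀ a ∈ l, IsAtomIn N a) ∧ l.sum = n ∧ l.length = k}

variable {f : M →+ Multiset α} {N : AddSubmonoid M}

theorem isPMAtom_map_iff (hf : Function.Injective f) {n : M} :
    IsPMAtom (N.map f) (f n) ↔ IsAtomIn N n := by
  simp only [IsPMAtom, IsAtomIn, AddSubmonoid.mem_map_iff_mem hf, ne_eq, map_eq_zero_iff f hf]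
  refine and_congr_right fun _ => and_congr_right fun _ => ⟨fun h b hb c hc hbc => ?_, ?_⟩
  · simpa [map_eq_zero_iff f hf] using
      h (f b) (f c) ⟨b, hb, rfl⟩ ⟨c, hc, rfl⟩ (by rw [hbc, f.map_add])
  · rintro h _ _ ⟨b, hb, rfl⟩ ⟨c, hc, rfl⟩ hbc
    rw [← f.map_add, hf.eq_iff] at hbc
    simpa [map_eq_zero_iff f hf] using h b hb c hc hbc

theorem exists_list_map_eq_of_forall_isPMAtom_map (hf : Function.Injective f)
    {l : List (Multiset α)} (hl : ∀ A ∈ l, IsPMAtom (N.map f) A) :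
    ∃ l' : List M, (∀ a ∈ l', IsAtomIn N a) ∧ l'.map f = l := by
  induction l with
  | nil => exact ⟨[], by simp, rfl⟩
  | cons A l ih =>
    obtain ⟨l', hl', rfl⟩ := ih fun B hB => hl B (List.mem_cons_of_mem _ hB)
    obtain ⟨a, -, rfl⟩ := (hl A List.mem_cons_self).1
    have ha : IsAtomIn N a := (isPMAtom_map_iff hf).1 (hl _ List.mem_cons_self)
    exact ⟨a :: l', List.forall_mem_cons.2 ⟨ha, hl'⟩, rfl⟩

theorem lengthSet_map (hf : Function.Injective f) (n : M) :
    LengthSet (N.map f) (f n) = lengthsIn N n := by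
  ext k
  constructor
  · rintro ⟨l, hl, hsum, rfl⟩
    obtain ⟨l', hl', rfl⟩ := exists_list_map_eq_of_forall_isPMAtom_map hf hl
    rw [← map_list_sum, hf.eq_iff] at hsum
    exact ⟨l', hl', hsum, (List.length_map _).symm⟩
  · rintro ⟨l, hl, rfl, rfl⟩
    refine ⟨l.map f, ?_, (map_list_sum f l).symm, List.length_map _⟩
    simpa [isPMAtom_map_iff hf] using hl

theorem deltaM_map (hf : Function.Injective f) :
    DeltaM (N.map f) = {d | ∃ n ∈ N, d ∈ DistSet (lengthsIn N n)} := by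
  ext d
  simp only [DeltaM, AddSubmonoid.mem_map, Set.mem_ofPred_eq]
  constructor
  · rintro ⟨_, ⟨n, hn, rfl⟩, hd⟩
    exact ⟨n, hn, by rwa [← lengthSet_map hf]⟩
  · rintro ⟨n, hn, hd⟩
    exact ⟨f n, ⟨n, hn, rfl⟩, by rwa [lengthSet_map hf]⟩

end Transfer

section NumericalMonoid

variable {m n : ℕ}

theorem mem_closure_two_iff :
    n ∈ AddSubmonoid.closure ({2, m} : Set ℕ) ↔ ∃ x y, 2 * x + m * y = n := by
  simp only [AddSubmonoid.mem_closure_pair, smul_eq_mul, mul_comm]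

theorem nonempty_closure_two_addEquiv_nat_of_even (hm : Even m) :
    Nonempty (AddSubmonoid.closure ({2, m} : Set ℕ) ≃+ ℕ) := by
  have hclosure :
      AddSubmonoid.closure ({2, m} : Set ℕ) = AddMonoidHom.mrange (multiplesHom ℕ 2) := by
    ext n
    obtain ⟨j, rfl⟩ := hm
    simp only [mem_closure_two_iff, AddMonoidHom.mem_mrange, multiplesHom_apply, smul_eq_mul]
    exact ⟨fun ⟨x, y, h⟩ => ⟨x + j * y, by rw [← h]; ring⟩,
      fun ⟨k, h⟩ => ⟨k, 0, by rw [← h]; ring⟩⟩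
  exact ⟨(AddEquiv.addSubmonoidCongr hclosure).trans
    (AddEquiv.ofLeftInverse' (multiplesHom ℕ 2) (g := (· / 2)) fun n => by simp).symm⟩

theorem IsAtomIn.eq_two_or_eq (h : IsAtomIn (AddSubmonoid.closure ({2, m} : Set ℕ)) n) :
    n = 2 ∨ n = m := by
  obtain ⟨hn, hn0, hsplit⟩ := h
  obtain ⟨x, y, rfl⟩ := mem_closure_two_iff.1 hn
  rcases Nat.eq_zero_or_pos x with rfl | hx
  · have hm : m ≠ 0 := fun h => hn0 (by simp [h])
    obtain ⟨y, rfl⟩ := Nat.exists_eq_add_one_of_ne_zero (n := y) fun h => hn0 (by simp [h])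
    have := hsplit m (AddSubmonoid.subset_closure (by simp)) (m * y)
      (mem_closure_two_iff.2 ⟨0, y, by ring⟩) (by ring)
    simp only [hm, false_or, mul_eq_zero] at this
    right; rw [this]; ring
  · have := hsplit 2 (AddSubmonoid.subset_closure (by simp)) (2 * (x - 1) + m * y)
      (mem_closure_two_iff.2 ⟨x - 1, y, rfl⟩) (by omega)
    omega

theorem isAtomIn_two (hm : m ≠ 1) : IsAtomIn (AddSubmonoid.closure ({2, m} : Set ℕ)) 2 := by
  have one_notMem : 1 ∉ AddSubmonoid.closure ({2, m} : Set ℕ) := by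
    rintro h
    obtain ⟨x, y, h⟩ := mem_closure_two_iff.1 h
    rcases Nat.eq_zero_or_pos y with rfl | hy
    · omega
    · have := Nat.le_mul_of_pos_right m hy
      obtain rfl : m = 0 := by omega
      omega
  refine ⟨AddSubmonoid.subset_closure (by simp), two_ne_zero, fun b hb c _ hbc => ?_⟩
  rcases (by omega : b = 0 ∨ b = 1 ∨ c = 0) with h | rfl | h
  · exact .inl h
  · exact absurd hb one_notMem
  · exact .inr h

theorem le_of_odd_of_mem_closure_two (hn : n ∈ AddSubmonoid.closure ({2, m} : Set ℕ))
    (hodd : Odd n) : m ≤ n := by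
  obtain ⟨x, y, rfl⟩ := mem_closure_two_iff.1 hn
  rcases Nat.eq_zero_or_pos y with rfl | hy
  · rw [mul_zero, add_zero] at hodd
    exact absurd (even_two_mul x) (Nat.not_even_iff_odd.2 hodd)
  · nlinarith

theorem isAtomIn_self_of_odd (hm : Odd m) :
    IsAtomIn (AddSubmonoid.closure ({2, m} : Set ℕ)) m := by
  refine ⟨AddSubmonoid.subset_closure (by simp), hm.pos.ne', fun b hb c hc hbc => ?_⟩
  rcases Nat.even_or_odd b with hb' | hb'
  · have hc' : Odd c := by rw [hbc] at hm; exact (Nat.odd_add'.1 hm).2 hb'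
    have := le_of_odd_of_mem_closure_two hc hc'
    omega
  · have := le_of_odd_of_mem_closure_two hb hb'
    omega

theorem isAtomIn_closure_two_iff_of_odd (hm : Odd m) (hm1 : m ≠ 1) :
    IsAtomIn (AddSubmonoid.closure ({2, m} : Set ℕ)) n ↔ n = 2 ∨ n = m :=
  ⟨IsAtomIn.eq_two_or_eq, by
    rintro (rfl | rfl); exacts [isAtomIn_two hm1, isAtomIn_self_of_odd hm]⟩

theorem IsAtomIn.eq_two_of_even (hm : Even m)
    (h : IsAtomIn (AddSubmonoid.closure ({2, m} : Set ℕ)) n) : n = 2 := by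
  obtain h2 | rfl := h.eq_two_or_eq
  · exact h2
  obtain ⟨⟨j, rfl⟩, ⟨-, hj, hsplit⟩⟩ := And.intro hm h
  have := hsplit 2 (AddSubmonoid.subset_closure (by simp)) (2 * (j - 1))
    (mem_closure_two_iff.2 ⟨j - 1, 0, by ring⟩) (by omega)
  omega

end NumericalMonoid

section Lengths

def pairLengths (p q n : ℕ) : Set ℕ := {k | ∃ x y, x + y = k ∧ p * x + q * y = n}

theorem exists_list_iff_mem_pairLengths {p q n k : ℕ} :
    (∃ l : List ℕ, (∀ a ∈ l, a = p ∨ a = q) ∧ l.sum = n ∧ l.length = k) ↔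
      k ∈ pairLengths p q n := by
  constructor
  · rintro ⟨l, hl, rfl, rfl⟩
    induction l with
    | nil => exact ⟨0, 0, by simp⟩
    | cons a l ih =>
      obtain ⟨x, y, hxy, hsum⟩ := ih fun b hb => hl b (List.mem_cons_of_mem _ hb)
      rcases hl a List.mem_cons_self with rfl | rfl
      · exact ⟨x + 1, y, by simp [← hxy]; ring, by simp [← hsum]; ring⟩
      · exact ⟨x, y + 1, by simp [← hxy]; ring, by simp [← hsum]; ring⟩
  · rintro ⟨x, y, rfl, rfl⟩
    refine ⟨List.replicate x p ++ List.replicate y q, ?_, by simp [mul_comm], by simp⟩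
    simp only [List.mem_append, List.mem_replicate]
    rintro a (⟨-, rfl⟩ | ⟨-, rfl⟩) <;> simp

variable {m : ℕ}

theorem lengthsIn_closure_two_of_odd (hm : Odd m) (hm1 : m ≠ 1) (n : ℕ) :
    lengthsIn (AddSubmonoid.closure ({2, m} : Set ℕ)) n = pairLengths 2 m n := by
  ext k
  simp only [lengthsIn, isAtomIn_closure_two_iff_of_odd hm hm1, Set.mem_ofPred_eq]
  exact exists_list_iff_mem_pairLengths

theorem lengthsIn_closure_two_subsingleton_of_even (hm : Even m) (n : ℕ) :
    (lengthsIn (AddSubmonoid.closure ({2, m} : Set ℕ)) n).Subsingleton := by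
  suffices ∀ k ∈ lengthsIn (AddSubmonoid.closure ({2, m} : Set ℕ)) n, 2 * k = n from
    fun k hk k' hk' => by have h₁ := this k hk; have h₂ := this k' hk'; omega
  rintro k ⟨l, hl, rfl, rfl⟩
  rw [List.sum_eq_card_nsmul l 2 fun a ha => (hl a ha).eq_two_of_even hm, smul_eq_mul, mul_comm]

theorem exists_eq_add_two_mul_of_odd {x y x' y' : ℕ} (hm : Odd m)
    (h : 2 * x + m * y = 2 * x' + m * y') (hy : y' ≤ y) :
    ∃ t, y = y' + 2 * t ∧ x' = x + m * t := by
  obtain ⟨s, rfl⟩ := Nat.exists_eq_add_of_le hy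
  have hs : 2 * x + m * s = 2 * x' := by rw [mul_add] at h; omega
  obtain ⟨t, rfl⟩ : Even s := by
    have : Even (m * s) := ⟨x' - x, by omega⟩
    exact (Nat.even_mul.1 this).resolve_left (Nat.not_even_iff_odd.2 hm)
  exact ⟨t, by ring, by rw [← two_mul, mul_left_comm] at hs; omega⟩

end Lengths

section Distances

def IsProgression (e : ℕ) (L : Set ℕ) : Prop :=
  ∀ a ∈ L, ∀ b ∈ L, a < b → e ∣ b - a ∧ a + e ∈ L

variable {L : Set ℕ} {e : ℕ}

theorem distSet_eq_empty_of_subsingleton (hL : L.Subsingleton) : DistSet L = ∅ :=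
  Set.eq_empty_of_forall_notMem fun _ ⟨hd, _, ha, had, _⟩ => by
    have := hL ha had
    omega

theorem IsProgression.distSet_subset (hL : IsProgression e L) : DistSet L ⊆ {e} := by
  rintro d ⟨hd, a, ha, had, hmin⟩
  obtain ⟨hdvd, hae⟩ := hL a ha (a + d) had (by omega)
  have hed : e ≤ d := Nat.le_of_dvd hd (by simpa using hdvd)
  have he : 0 < e := Nat.pos_of_ne_zero fun h => by simp [h] at hdvd; omega
  have hde : a + d ≤ a + e := hmin _ hae (by omega)
  exact Set.mem_singleton_iff.2 (by omega)

theorem IsProgression.mem_distSet (hL : IsProgression e L) (he : 0 < e) {a : ℕ} (ha : a ∈ L)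
    (hae : a + e ∈ L) : e ∈ DistSet L := by
  refine ⟨he, a, ha, hae, fun b hb hab => ?_⟩
  have := Nat.le_of_dvd (by omega) (hL a ha b hb hab).1
  omega

theorem isProgression_pairLengths_two {m : ℕ} (hm : Odd m) (hm1 : m ≠ 1) (n : ℕ) :
    IsProgression (m - 2) (pairLengths 2 m n) := by
  rintro _ ⟨x, y, rfl, hxy⟩ _ ⟨x', y', rfl, hxy'⟩ hlt
  have hm3 : 3 ≤ m := by obtain ⟨j, rfl⟩ := hm; omega
  rcases le_total y' y with hy | hy
  · obtain ⟨t, rfl, rfl⟩ := exists_eq_add_two_mul_of_odd hm (hxy.trans hxy'.symm) hy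
    obtain ⟨k, rfl⟩ : ∃ k, m = k + 2 := ⟨m - 2, by omega⟩
    obtain ⟨t, rfl⟩ := Nat.exists_eq_add_one_of_ne_zero (n := t) (by rintro rfl; simp at hlt)
    have hdiff : x + (k + 2) * (t + 1) + y' = x + (y' + 2 * (t + 1)) + k * (t + 1) := by ring
    rw [Nat.add_sub_cancel]
    refine ⟨⟨t + 1, by omega⟩, x + (k + 2), y' + 2 * t, by ring, ?_⟩
    rw [← hxy]; ring
  · obtain ⟨t, rfl, rfl⟩ := exists_eq_add_two_mul_of_odd hm (hxy'.trans hxy.symm) hy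
    nlinarith

end Distances

theorem mem_closure_two_addOrderOf_iff {g : G} {n : ℕ} :
    n ∈ AddSubmonoid.closure ({2, addOrderOf g} : Set ℕ) ↔
      ∃ a b : ℕ, a + b = n ∧ a • g = b • g := by
  simp only [mem_closure_two_iff, nsmul_eq_nsmul_iff_modEq]
  constructor
  · rintro ⟨x, y, rfl⟩
    refine ⟨x + addOrderOf g * y, x, by ring, ?_⟩
    simp [Nat.ModEq]
  · rintro ⟨a, b, rfl, hab⟩
    wlog hba : b ≤ a generalizing a b
    · obtain ⟨x, y, h⟩ := this b a hab.symm (by omega)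
      exact ⟨x, y, by rw [h, add_comm]⟩
    obtain ⟨y, hy⟩ := (Nat.modEq_iff_dvd' hba).mp hab.symm
    exact ⟨b, y, by rw [← hy]; omega⟩

theorem PMZS_singleton_eq_map (g : G) :
    PMZS ({g} : Set G) =
      (AddSubmonoid.closure ({2, addOrderOf g} : Set ℕ)).map (replicateAddMonoidHom g) := by
  ext S
  simp only [AddSubmonoid.mem_map, mem_closure_two_addOrderOf_iff, replicateAddMonoidHom_apply]
  constructor
  · rintro ⟨hS, S₁, S₂, rfl, hsum⟩
    obtain ⟨h₁, h₂⟩ : S₁ = replicate (card S₁) g ∧ S₂ = replicate (card S₂) g :=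
      ⟨eq_replicate_card.2 fun x hx => hS x (mem_add.2 (.inl hx)),
        eq_replicate_card.2 fun x hx => hS x (mem_add.2 (.inr hx))⟩
    rw [h₁, h₂, sum_replicate, sum_replicate] at hsum
    refine ⟨_, ⟨_, _, rfl, hsum⟩, ?_⟩
    rw [replicate_add, ← h₁, ← h₂]
  · rintro ⟨n, ⟨a, b, rfl, hab⟩, rfl⟩
    refine ⟨fun x hx => eq_of_mem_replicate hx, replicate a g, replicate b g,
      replicate_add _ _ _, ?_⟩
    rwa [sum_replicate, sum_replicate]

/-- For `g ∈ G \ {0}` and `H = B±({g})`: (1) if the order of `g` is infinite or even then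
`H ≅ (ℕ, +)` and `Δ(H) = ∅`; (2) if the order of `g` is odd then `H` is isomorphic to the
numerical monoid `⟨2, ord g⟩ ⊆ (ℕ, +)` and `Δ(H) = {ord g - 2}`. -/
theorem stmt_5 (G : Type*) [AddCommGroup G] (g : G) (hg : g ≠ 0) :
    ((addOrderOf g = 0 ∨ Even (addOrderOf g)) →
      Nonempty ((PMZS ({g} : Set G)) ≃+ ℕ) ∧ DeltaM (PMZS ({g} : Set G)) = ∅) ∧
    (Odd (addOrderOf g) →
      Nonempty ((PMZS ({g} : Set G)) ≃+
        (AddSubmonoid.closure ({2, addOrderOf g} : Set ℕ))) ∧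
      DeltaM (PMZS ({g} : Set G)) = {addOrderOf g - 2}) := by
  have hinj : Function.Injective (replicateAddMonoidHom g) := replicate_left_injective g
  rw [PMZS_singleton_eq_map, deltaM_map hinj]
  have hequiv := (AddSubmonoid.equivMapOfInjective
    (AddSubmonoid.closure ({2, addOrderOf g} : Set ℕ)) _ hinj).symm
  refine ⟨fun hm => ?_, fun hm => ?_⟩
  · replace hm : Even (addOrderOf g) := hm.elim (fun h => h ▸ Even.zero) id
    obtain ⟨e⟩ := nonempty_closure_two_addEquiv_nat_of_even hm
    refine ⟨⟨hequiv.trans e⟩, Set.eq_empty_of_forall_notMem fun d ⟨n, _, hd⟩ => ?_⟩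
    rwa [distSet_eq_empty_of_subsingleton (lengthsIn_closure_two_subsingleton_of_even hm n)] at hd
  · have hm1 : addOrderOf g ≠ 1 := fun h => hg (AddMonoid.addOrderOf_eq_one_iff.1 h)
    have hm3 : 3 ≤ addOrderOf g := by obtain ⟨j, hj⟩ := hm; omega
    have hprog := isProgression_pairLengths_two hm hm1
    refine ⟨⟨hequiv⟩, Set.Subset.antisymm ?_ ?_⟩
    · rintro d ⟨n, -, hd⟩
      rw [lengthsIn_closure_two_of_odd hm hm1] at hd
      exact (hprog n).distSet_subset hd
    · rintro _ rfl
      refine ⟨2 * addOrderOf g, mem_closure_two_iff.2 ⟨addOrderOf g, 0, by ring⟩, ?_⟩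
      rw [lengthsIn_closure_two_of_odd hm hm1]
      exact (hprog _).mem_distSet (by omega) (a := 2) ⟨0, 2, rfl, by ring⟩
        ⟨addOrderOf g, 0, by omega, by ring⟩
end

section
/- Let G be an abelian group, G₀ ⊆ G a subset, and H = B±(G₀). Then {ord(g) − 2 : g ∈ G₀, ord(g) ≥ 3 odd} ⊆ Δ(H). -/
open Multiset

variable {G : Type*} [AddCommGroup G]

/-!
If `g ∈ G₀` has odd order `n ≥ 3`, then `g^k` is a plus-minus weighted zero-sum sequence exactly
when `k` is even or `k ≥ n`, so the atoms of `B±(G₀)` dividing a power of `g` are `g^2` and `g^n`.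
Hence the only factorizations of `g^(2n)` are `(g^n)^2` and `(g^2)^n`, and `L(g^(2n)) = {2, n}`.
-/

theorem sub_mem_distSet_pair {a b : ℕ} (hab : a < b) : b - a ∈ DistSet {a, b} := by
  refine ⟨by omega, a, by simp, by simp [Nat.add_sub_cancel' hab.le], ?_⟩
  rintro c (rfl | rfl) hc <;> omega

theorem List.exists_sum_eq_of_forall_mem_eq_or_eq {a b : ℕ} {L : List ℕ}
    (h : ∀ x ∈ L, x = a ∨ x = b) : ∃ i j, i + j = L.length ∧ L.sum = i * a + j * b := by
  induction L with
  | nil => exact ⟨0, 0, by simp⟩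
  | cons x L ih =>
    obtain ⟨i, j, hlen, hsum⟩ := ih fun y hy ↦ h y (mem_cons_of_mem x hy)
    rcases h x mem_cons_self with rfl | rfl
    · exact ⟨i + 1, j, by simp; omega, by simp [hsum]; ring⟩
    · exact ⟨i, j + 1, by simp; omega, by simp [hsum]; ring⟩

theorem isPMAtom_replicate_iff {α : Type*} {a : α} (H : AddSubmonoid (Multiset α)) {k : ℕ} :
    IsPMAtom H (replicate k a) ↔ replicate k a ∈ H ∧ k ≠ 0 ∧
      ∀ i j, i + j = k → replicate i a ∈ H → replicate j a ∈ H → i = 0 ∨ j = 0 := by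
  have replicate_eq_zero : ∀ i, replicate i a = 0 ↔ i = 0 := fun i ↦ by
    rw [← card_eq_zero, card_replicate]
  refine and_congr_right fun _ ↦ and_congr (not_congr (replicate_eq_zero k))
    ⟨fun h i j hij hi hj ↦ ?_, fun h B C hB hC hBC ↦ ?_⟩
  · simpa [replicate_eq_zero] using h _ _ hi hj (by rw [← hij, replicate_add])
  · obtain ⟨i, -, rfl⟩ := le_replicate_iff.mp (hBC ▸ Multiset.le_add_right B C)
    obtain ⟨j, -, rfl⟩ := le_replicate_iff.mp (hBC ▸ Multiset.le_add_left C _)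
    simpa [replicate_eq_zero] using h i j (by simpa using (congrArg card hBC).symm) hB hC

variable {g : G}

theorem isPMZeroSum_replicate_iff_of_odd (hodd : Odd (addOrderOf g)) {k : ℕ} :
    IsPMZeroSum (replicate k g) ↔ Even k ∨ addOrderOf g ≤ k := by
  constructor
  · rintro ⟨S₁, S₂, hS, hsum⟩
    obtain ⟨k₁, -, rfl⟩ := le_replicate_iff.mp (hS ▸ Multiset.le_add_right S₁ S₂)
    obtain ⟨k₂, -, rfl⟩ := le_replicate_iff.mp (hS ▸ Multiset.le_add_left S₂ _)
    have hk : k = k₁ + k₂ := by simpa using congrArg card hS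
    simp only [sum_replicate, nsmul_eq_nsmul_iff_modEq] at hsum
    rcases Nat.even_or_odd k with heven | hkodd
    · exact .inl heven
    right
    -- `k` odd forces `k₁ ≠ k₂`, and `ord g ∣ k₁ - k₂`
    rcases le_total k₁ k₂ with hle | hle
    · have := Nat.le_of_dvd (by grind) ((Nat.modEq_iff_dvd' hle).mp hsum)
      omega
    · have := Nat.le_of_dvd (by grind) ((Nat.modEq_iff_dvd' hle).mp hsum.symm)
      omega
  · rintro (⟨r, rfl⟩ | hle)
    · exact ⟨replicate r g, replicate r g, replicate_add r r g, rfl⟩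
    rcases Nat.even_or_odd k with ⟨r, rfl⟩ | hkodd
    · exact ⟨replicate r g, replicate r g, replicate_add r r g, rfl⟩
    obtain ⟨r, hr⟩ : Even (k - addOrderOf g) :=
      (Nat.even_sub hle).mpr (iff_of_false (Nat.not_even_iff_odd.mpr hkodd)
        (Nat.not_even_iff_odd.mpr hodd))
    refine ⟨replicate (addOrderOf g + r) g, replicate r g, ?_, ?_⟩
    · rw [← replicate_add]; congr 1; omega
    · simp [add_nsmul, addOrderOf_nsmul_eq_zero]

variable {G₀ : Set G}

theorem replicate_mem_PMZS_iff (hg : g ∈ G₀) (hodd : Odd (addOrderOf g)) {k : ℕ} :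
    replicate k g ∈ PMZS G₀ ↔ Even k ∨ addOrderOf g ≤ k :=
  (and_iff_right fun _ hx ↦ eq_of_mem_replicate hx ▸ hg).trans
    (isPMZeroSum_replicate_iff_of_odd hodd)

theorem isPMAtom_PMZS_replicate_iff (hg : g ∈ G₀) (hodd : Odd (addOrderOf g))
    (hn : 3 ≤ addOrderOf g) {k : ℕ} :
    IsPMAtom (PMZS G₀) (replicate k g) ↔ k = 2 ∨ k = addOrderOf g := by
  simp only [isPMAtom_replicate_iff, replicate_mem_PMZS_iff hg hodd, Nat.even_iff]
  obtain ⟨m, hm⟩ := hodd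
  constructor
  · rintro ⟨hk, hk0, hsplit⟩
    by_contra hne
    -- otherwise `g^k` splits as `g^2 g^(k-2)` (`k` even) or `g^n g^(k-n)` (`k` odd)
    rcases Nat.mod_two_eq_zero_or_one k with hpar | hpar
    · have := hsplit 2 (k - 2) (by omega) (by omega) (by omega)
      omega
    · have := hsplit (addOrderOf g) (k - addOrderOf g) (by omega) (by omega) (by omega)
      omega
  · rintro (rfl | rfl) <;> exact ⟨by omega, by omega, fun i j hij hi hj ↦ by omega⟩

theorem eq_replicate_of_isPMAtom_of_le (hodd : Odd (addOrderOf g)) (hn : 3 ≤ addOrderOf g)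
    {A : Multiset G} {m : ℕ} (hA : IsPMAtom (PMZS G₀) A) (hle : A ≤ replicate m g) :
    A = replicate 2 g ∨ A = replicate (addOrderOf g) g := by
  obtain ⟨k, -, rfl⟩ := le_replicate_iff.mp hle
  have hk : k ≠ 0 := by rintro rfl; exact hA.2.1 rfl
  have hg : g ∈ G₀ := hA.1.1 g (mem_replicate.mpr ⟨hk, rfl⟩)
  rcases (isPMAtom_PMZS_replicate_iff hg hodd hn).mp hA with rfl | rfl <;> simp

theorem lengthSet_PMZS_replicate_two_mul (hg : g ∈ G₀) (hodd : Odd (addOrderOf g))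
    (hn : 3 ≤ addOrderOf g) :
    LengthSet (PMZS G₀) (replicate (2 * addOrderOf g) g) = {2, addOrderOf g} := by
  have atom_iff {k : ℕ} := isPMAtom_PMZS_replicate_iff (k := k) hg hodd hn
  ext k
  constructor
  · rintro ⟨l, hatoms, hsum, rfl⟩
    have hcard : ∀ x ∈ l.map card, x = 2 ∨ x = addOrderOf g := by
      simp only [List.mem_map, forall_exists_index, and_imp, forall_apply_eq_imp_iff₂]
      intro A hA
      have hle : A ≤ replicate (2 * addOrderOf g) g := hsum ▸ List.le_sum_of_mem hA
      rcases eq_replicate_of_isPMAtom_of_le hodd hn (hatoms A hA) hle with rfl | rfl <;> simp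
    obtain ⟨i, j, hlen, hij⟩ := List.exists_sum_eq_of_forall_mem_eq_or_eq hcard
    have hsum_card : (l.map card).sum = card l.sum := (map_list_sum cardHom l).symm
    rw [hsum_card, hsum, card_replicate] at hij
    rw [List.length_map] at hlen
    -- `2 * n = 2 * i + n * j` with `n` odd forces `(i, j) = (0, 2)` or `(n, 0)`
    simp only [Set.mem_insert_iff, Set.mem_singleton_iff]
    rcases Nat.lt_or_ge j 2 with hj | hj
    · obtain ⟨m, hm⟩ := hodd
      interval_cases j <;> omega
    · have hi : i = 0 := by nlinarith
      have : j * addOrderOf g = 2 * addOrderOf g := by linarith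
      have : j = 2 := Nat.eq_of_mul_eq_mul_right (by omega) this
      omega
  · rintro (rfl | rfl)
    · refine ⟨[replicate (addOrderOf g) g, replicate (addOrderOf g) g], ?_,
        by simp [← replicate_add, two_mul], rfl⟩
      simpa using atom_iff.mpr (.inr rfl)
    · refine ⟨List.replicate (addOrderOf g) (replicate 2 g), ?_, ?_, List.length_replicate⟩
      · simpa using fun _ ↦ atom_iff.mpr (.inl rfl)
      · rw [List.sum_replicate, nsmul_replicate, mul_comm]

/-- For `H = B±(G₀)`: `{ord g - 2 : g ∈ G₀, ord g ≥ 3 odd} ⊆ Δ(H)`. -/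
theorem stmt_6 (G : Type*) [AddCommGroup G] (G₀ : Set G) :
    {d : ℕ | ∃ g ∈ G₀, Odd (addOrderOf g) ∧ 3 ≤ addOrderOf g ∧ d = addOrderOf g - 2} ⊆
      DeltaM (PMZS G₀) := by
  rintro d ⟨g, hg, hodd, hn, rfl⟩
  refine ⟨replicate (2 * addOrderOf g) g,
    (replicate_mem_PMZS_iff hg hodd).mpr (.inl (even_two_mul _)), ?_⟩
  rw [lengthSet_PMZS_replicate_two_mul hg hodd hn]
  exact sub_mem_distSet_pair (by omega)
end
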